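/- Let (A, B, C) be the maximal solution of the normalized Ricci flow ODE system (⋆) on (−T_b, T_f) with positive initial data satisfying B(0) ≥ C(0) and A(0)B(0)C(0) = 4. Then the maximal backward existence time is finite: T_b ∈ (0, ∞). -/

import Mathlib

open Real Filter Set Topology

/-- Right-hand side of the normalized Ricci flow ODE (⋆) for `A`. -/
noncomputable def ricciA (A B C : ℝ) : ℝ :=
  (2 / 3) * (-A ^ 2 * (2 * A + B + C) + A * (B - C) ^ 2)

/-- Right-hand side of the normalized Ricci flow ODE (⋆) for `B`. -/
noncomputable def ricciB (A B C : ℝ) : ℝ :=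
  (2 / 3) * (-B ^ 2 * (2 * B + A - C) + B * (A + C) ^ 2)

/-- Right-hand side of the normalized Ricci flow ODE (⋆) for `C`. -/
noncomputable def ricciC (A B C : ℝ) : ℝ :=
  (2 / 3) * (-C ^ 2 * (2 * C + A - B) + C * (A + B) ^ 2)

/-- `(A, B, C)` is a positive solution of the normalized Ricci flow ODE system (⋆) on `I`. -/
def IsRicciSolOn (A B C : ℝ → ℝ) (I : Set ℝ) : Prop :=
  ∀ t ∈ I, 0 < A t ∧ 0 < B t ∧ 0 < C t ∧
    HasDerivAt A (ricciA (A t) (B t) (C t)) t ∧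
    HasDerivAt B (ricciB (A t) (B t) (C t)) t ∧
    HasDerivAt C (ricciC (A t) (B t) (C t)) t
/-- The open interval `(-T_b, T_f)` of real times, where `T_b, T_f` are extended reals. -/
def flowInterval (Tb Tf : EReal) : Set ℝ :=
  {t : ℝ | -Tb < (t : EReal) ∧ (t : EReal) < Tf}

/-- `(A, B, C)` is the maximal positive solution of the normalized Ricci flow ODE system (⋆)
on the interval `(-T_b, T_f)` containing `0`: it is a solution there, and any solution on a
larger interval of the same form which agrees with it must have the same interval. -/
def IsMaximalRicciSol (A B C : ℝ → ℝ) (Tb Tf : EReal) : Prop :=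
  0 < Tb ∧ 0 < Tf ∧ IsRicciSolOn A B C (flowInterval Tb Tf) ∧
  ∀ (Tb' Tf' : EReal) (A' B' C' : ℝ → ℝ), Tb ≤ Tb' → Tf ≤ Tf' →
    IsRicciSolOn A' B' C' (flowInterval Tb' Tf') →
    (∀ t ∈ flowInterval Tb Tf, A' t = A t ∧ B' t = B t ∧ C' t = C t) →
    Tb' = Tb ∧ Tf' = Tf

/-
The difference `B - C` solves a linear equation `(B - C)' = g (B - C)`, so its sign is preserved
and `C ≤ B` persists for all `t ≤ 0`. Then `Q = A + B - C` is positive and `Q' ≤ -Q³/12`, so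
`1/Q²` grows at rate at least `1/6`; followed backwards it would turn negative by time
`-6/Q(0)²`. Hence no positive solution exists on all of `(-∞, 0]`.
-/

lemma ricciB_sub_ricciC (a b c : ℝ) :
    ricciB a b c - ricciC a b c =
      (2 / 3) * (a ^ 2 - a * (b + c) - 2 * (b ^ 2 + b * c + c ^ 2)) * (b - c) := by
  simp only [ricciB, ricciC]
  ring

lemma ricciA_add_ricciB_sub_ricciC_le {a b c : ℝ} (ha : 0 < a) (hb : 0 < b) (hc : 0 < c)
    (hcb : c ≤ b) :
    ricciA a b c + ricciB a b c - ricciC a b c ≤ -(1 / 12) * (a + b - c) ^ 3 := by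
  have hbc : 0 ≤ b - c := by linarith
  simp only [ricciA, ricciB, ricciC]
  nlinarith [mul_nonneg (sq_nonneg (a - b + c)) (by linarith : (0 : ℝ) ≤ a + b - c),
    mul_nonneg (mul_nonneg ha.le hc.le) hbc, mul_nonneg (mul_nonneg hb.le hc.le) hbc,
    mul_pos (mul_pos ha ha) hc, pow_pos ha 3, pow_nonneg hbc 3]

lemma nonneg_of_hasDerivAt_mul_self {x g : ℝ → ℝ} {a b : ℝ} (hab : a ≤ b)
    (hg : ContinuousOn g (Icc a b)) (hx : ∀ t ∈ Icc a b, HasDerivAt x (g t * x t) t)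
    (hb : 0 ≤ x b) : 0 ≤ x a := by
  have hg_ext : Continuous fun t => g (projIcc a b hab t) :=
    hg.comp_continuous (continuous_subtype_val.comp continuous_projIcc)
      fun t => (projIcc a b hab t).2
  set G : ℝ → ℝ := fun u => ∫ s in b..u, g (projIcc a b hab s)
  have hG : ∀ t ∈ Icc a b, HasDerivAt G (g t) t := fun t ht => by
    simpa [projIcc_of_mem hab ht] using (hg_ext.integral_hasStrictDerivAt b t).hasDerivAt
  -- `exp (-G)` is an integrating factor
  have hw : ∀ t ∈ Icc a b, HasDerivAt (fun u => x u * exp (-G u)) 0 t := fun t ht =>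
    ((hx t ht).mul (hG t ht).neg.exp).congr_deriv (by ring)
  have hconst := constant_of_has_deriv_right_zero
    (fun t ht => (hw t ht).continuousAt.continuousWithinAt)
    (fun t ht => (hw t (Ico_subset_Icc_self ht)).hasDerivWithinAt) b (right_mem_Icc.2 hab)
  have hwb : 0 ≤ x b * exp (-G b) := mul_nonneg hb (exp_pos _).le
  rw [hconst] at hwb
  exact (mul_nonneg_iff_of_pos_right (exp_pos _)).1 hwb

lemma mul_lt_inv_sq_of_deriv_le_neg_mul_cube {Q Q' : ℝ → ℝ} {k T : ℝ} (hT : 0 ≤ T)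
    (hpos : ∀ t ∈ Icc (-T) 0, 0 < Q t) (hQ : ∀ t ∈ Icc (-T) 0, HasDerivAt Q (Q' t) t)
    (hQ' : ∀ t ∈ Icc (-T) 0, Q' t ≤ -k * Q t ^ 3) :
    2 * k * T < (Q 0 ^ 2)⁻¹ := by
  have hderiv : ∀ t ∈ Icc (-T) 0, HasDerivAt (fun s => (Q s ^ 2)⁻¹ - 2 * k * s)
      (2 * (-Q' t / Q t ^ 3 - k)) t := fun t ht => by
    have hQt := (hpos t ht).ne'
    refine ((((hQ t ht).pow 2).inv (pow_ne_zero 2 hQt)).sub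
      ((hasDerivAt_id t).const_mul (2 * k))).congr_deriv ?_
    simp only [Pi.pow_apply]
    field_simp
    ring
  have hmono : MonotoneOn (fun s => (Q s ^ 2)⁻¹ - 2 * k * s) (Icc (-T) 0) := by
    refine monotoneOn_of_hasDerivWithinAt_nonneg (convex_Icc _ _)
      (fun t ht => (hderiv t ht).continuousAt.continuousWithinAt)
      (fun t ht => (hderiv t (interior_subset ht)).hasDerivWithinAt) fun t ht => ?_
    have ht := interior_subset ht
    have hQ3 := pow_pos (hpos t ht) 3
    have : k ≤ -Q' t / Q t ^ 3 := by
      rw [le_div_iff₀ hQ3]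
      linarith [hQ' t ht]
    linarith
  have hT0 : -T ∈ Icc (-T) 0 := left_mem_Icc.2 (by linarith)
  have hends := hmono hT0 (right_mem_Icc.2 (by linarith)) (by linarith)
  have hinv := inv_pos.2 (pow_pos (hpos (-T) hT0) 2)
  linarith

section

variable {A B C : ℝ → ℝ} {I : Set ℝ}

lemma IsRicciSolOn.continuousOn (h : IsRicciSolOn A B C I) :
    ContinuousOn A I ∧ ContinuousOn B I ∧ ContinuousOn C I :=
  ⟨fun t ht => (h t ht).2.2.2.1.continuousAt.continuousWithinAt,
    fun t ht => (h t ht).2.2.2.2.1.continuousAt.continuousWithinAt,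
    fun t ht => (h t ht).2.2.2.2.2.continuousAt.continuousWithinAt⟩

lemma IsRicciSolOn.C_le_B_of_le {s t : ℝ} (h : IsRicciSolOn A B C I) (hI : Icc t s ⊆ I)
    (hts : t ≤ s) (hs : C s ≤ B s) : C t ≤ B t := by
  have hts_sol : IsRicciSolOn A B C (Icc t s) := fun u hu => h u (hI hu)
  obtain ⟨hcA, hcB, hcC⟩ := hts_sol.continuousOn
  refine sub_nonneg.1 (nonneg_of_hasDerivAt_mul_self (x := fun u => B u - C u)
    (g := fun u => (2 / 3) * (A u ^ 2 - A u * (B u + C u) - 2 * (B u ^ 2 + B u * C u + C u ^ 2)))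
    hts (by fun_prop) (fun u hu => ?_) (sub_nonneg.2 hs))
  obtain ⟨-, -, -, -, hB, hC⟩ := hts_sol u hu
  exact (hB.sub hC).congr_deriv (ricciB_sub_ricciC _ _ _)

end

lemma Iic_subset_flowInterval_top {Tf : EReal} (hTf : 0 < Tf) : Iic 0 ⊆ flowInterval ⊤ Tf :=
  fun t ht => ⟨by simp, lt_of_le_of_lt (by exact_mod_cast ht) hTf⟩

theorem ricci_backward_time_finite_general (A B C : ℝ → ℝ) (Tb Tf : EReal)
    (hmax : IsMaximalRicciSol A B C Tb Tf)
    (hBC : C 0 ≤ B 0) :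
    0 < Tb ∧ Tb < ⊤ := by
  obtain ⟨hTb, hTf, hsol, -⟩ := hmax
  refine ⟨hTb, lt_top_iff_ne_top.2 fun hTop => ?_⟩
  subst hTop
  have hIic := Iic_subset_flowInterval_top hTf
  have hCB : ∀ t ≤ 0, C t ≤ B t := fun t ht =>
    hsol.C_le_B_of_le (Icc_subset_Iic_self.trans hIic) ht hBC
  set Q : ℝ → ℝ := fun t => A t + B t - C t
  have hQpos : ∀ t ≤ 0, 0 < Q t := fun t ht => by
    linarith [(hsol t (hIic ht)).1, hCB t ht]
  have hlife := mul_lt_inv_sq_of_deriv_le_neg_mul_cube (Q := Q) (k := 1 / 12)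
    (T := 6 * (Q 0 ^ 2)⁻¹) (by positivity) (fun t ht => hQpos t ht.2)
    (fun t ht => by
      obtain ⟨-, -, -, hA, hB, hC⟩ := hsol t (hIic ht.2)
      exact (hA.add hB).sub hC)
    (fun t ht => by
      obtain ⟨ha, hb, hc, -⟩ := hsol t (hIic ht.2)
      exact ricciA_add_ricciB_sub_ricciC_le ha hb hc (hCB t ht.2))
  linarith

/-- Backward behavior of the normalized Ricci flow on `SL(2,ℝ)`: the maximal backward
existence time `T_b` is finite, i.e. `T_b ∈ (0, ∞)`. -/
theorem ricci_backward_time_finite (A B C : ℝ → ℝ) (Tb Tf : EReal)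
    (hmax : IsMaximalRicciSol A B C Tb Tf)
    (hBC : C 0 ≤ B 0) (hnorm : A 0 * B 0 * C 0 = 4) :
    0 < Tb ∧ Tb < ⊤ :=
  ricci_backward_time_finite_general A B C Tb Tf hmax hBC
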